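/- Let (X,d) be a locally compact metric space with L-bounded turning for some L ≥ 1. Then for every L' > L, any two points x, y ∈ X can be joined by a path γ in X with diam(γ([0,1])) ≤ L' · d(x,y). -/

import Mathlib

open Set Metric Filter Topology
open scoped ENNReal NNReal

/-!
Bounded turning lets every link of a `δ`-chain from `u` to `v` be replaced by a `δ/2`-chain
inside a connected set of diameter at most `L δ`. Iterating from the one-link chain gives chains
of mesh `d(u,v)/2^m`, each within `L d(u,v)/2^m` of the previous one; reading the `m`-th chain at
parameter `t` gives a Cauchy sequence, and in a compact ball its limit `Γ t` is a path from `u`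
to `v` that stays within `(2L+1) d(u,v)` of `u`. So `X` is locally path connected. Then `x` and
`y`, which lie in a connected set `E` of diameter at most `L d(x,y)`, are joined by a path inside
the open `τ`-neighbourhood of `E`, `τ = (L' - L) d(x,y)/2`, whose diameter is at most `L' d(x,y)`.
-/

theorem Relation.ReflTransGen.exists_seq {α : Type*} {r : α → α → Prop} (hr : ∀ a, r a a)
    {a b : α} (h : Relation.ReflTransGen r a b) :
    ∃ (N : ℕ) (c : ℕ → α), c 0 = a ∧ (∀ j, N ≤ j → c j = b) ∧ ∀ j, r (c j) (c (j + 1)) := by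
  induction h using Relation.ReflTransGen.head_induction_on with
  | refl => exact ⟨0, fun _ => b, rfl, fun _ _ => rfl, fun _ => hr b⟩
  | head hac _ ih =>
    obtain ⟨N, c, hc0, hcN, hc⟩ := ih
    refine ⟨N + 1, fun | 0 => _ | j + 1 => c j, rfl, ?_, ?_⟩
    · rintro (_ | j) hj
      · omega
      · exact hcN j (by omega)
    · rintro (_ | j)
      · simpa [hc0] using hac
      · exact hc j

theorem PreconnectedSpace.reflTransGen_dist_le {Y : Type*} [PseudoMetricSpace Y]
    [PreconnectedSpace Y] {δ : ℝ} (hδ : 0 < δ) (a b : Y) :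
    Relation.ReflTransGen (fun p q : Y => dist p q ≤ δ) a b :=
  PreconnectedSpace.induction₂' _
    (fun x => eventually_of_mem (ball_mem_nhds x hδ) fun _ hy =>
      ⟨.single (dist_comm x _ ▸ hy.le), .single hy.le⟩)
    ⟨fun _ _ _ => Relation.ReflTransGen.trans⟩ a b

theorem IsPreconnected.joinedIn_of_subset_isOpen {Y : Type*} [TopologicalSpace Y]
    [LocallyPathConnectedSpace Y] {E U : Set Y} (hE : IsPreconnected E) (hU : IsOpen U)
    (hEU : E ⊆ U) {x y : Y} (hx : x ∈ E) (hy : y ∈ E) : JoinedIn U x y :=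
  hE.induction₂ (JoinedIn U)
    (fun _ ha => nhdsWithin_le_nhds (pathComponentIn_mem_nhds (hU.mem_nhds (hEU ha))))
    (fun _ _ _ _ _ _ => JoinedIn.trans) (fun _ _ _ _ => JoinedIn.symm) hx hy

theorem ediam_thickening_le_ofReal {Y : Type*} [PseudoMetricSpace Y] {E : Set Y} {a τ : ℝ}
    (ha : 0 ≤ a) (hτ : 0 ≤ τ) (hE : ediam E ≤ ENNReal.ofReal a) :
    ediam (thickening τ E) ≤ ENNReal.ofReal (a + 2 * τ) := by
  lift τ to ℝ≥0 using hτ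
  rw [ENNReal.ofReal_add ha (by positivity), ENNReal.ofReal_mul zero_le_two, ENNReal.ofReal_ofNat,
    ENNReal.ofReal_coe_nnreal]
  exact (ediam_thickening_le τ).trans (by gcongr)

theorem Metric.uniformContinuous_of_approx {α β : Type*} [PseudoMetricSpace α]
    [PseudoMetricSpace β] {g : α → β}
    (h : ∀ ε > 0, ∃ f : α → β, (∀ t, dist (f t) (g t) < ε) ∧
      ∃ η > 0, ∀ s t, dist s t < η → dist (f s) (f t) < ε) :
    UniformContinuous g := by
  refine Metric.uniformContinuous_iff.2 fun ε hε => ?_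
  obtain ⟨f, hfg, η, hη, hf⟩ := h (ε / 3) (by positivity)
  refine ⟨η, hη, fun {s t} hst => ?_⟩
  calc dist (g s) (g t) ≤ dist (g s) (f s) + dist (f s) (f t) + dist (f t) (g t) :=
        dist_triangle4 _ _ _ _
    _ < ε / 3 + ε / 3 + ε / 3 := by
        gcongr
        · exact dist_comm (g s) (f s) ▸ hfg s
        · exact hf s t hst
        · exact hfg t
    _ = ε := by ring

def HasBoundedTurning (L : ℝ) (X : Type*) [MetricSpace X] : Prop :=
  ∀ x y : X, ∃ E : Set X, x ∈ E ∧ y ∈ E ∧ IsConnected E ∧ ediam E ≤ ENNReal.ofReal (L * dist x y)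

section

variable {X : Type*} [MetricSpace X]

theorem IsPreconnected.exists_seq_dist_le {E : Set X} (hE : IsPreconnected E) {a b : X}
    (ha : a ∈ E) (hb : b ∈ E) {δ : ℝ} (hδ : 0 < δ) :
    ∃ (N : ℕ) (c : ℕ → X), c 0 = a ∧ (∀ j, N ≤ j → c j = b) ∧ (∀ j, c j ∈ E) ∧
      ∀ j, dist (c j) (c (j + 1)) ≤ δ := by
  have := Subtype.preconnectedSpace hE
  obtain ⟨N, c, hc0, hcN, hc⟩ :=
    (PreconnectedSpace.reflTransGen_dist_le (Y := E) hδ ⟨a, ha⟩ ⟨b, hb⟩).exists_seq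
      fun p => by simpa using hδ.le
  exact ⟨N, fun j => c j, by simp [hc0], fun j hj => by simp [hcN j hj], fun j => (c j).2, hc⟩

lemma dist_div_mod_succ_le {f : ℕ → ℕ → X} {K : ℕ} {ε : ℝ} (hK : 0 < K)
    (hin : ∀ i j, j + 1 < K → dist (f i j) (f i (j + 1)) ≤ ε)
    (hacross : ∀ i, dist (f i (K - 1)) (f (i + 1) 0) ≤ ε) (q : ℕ) :
    dist (f (q / K) (q % K)) (f ((q + 1) / K) ((q + 1) % K)) ≤ ε := by
  have hq : q + 1 = K * (q / K) + (q % K + 1) := by rw [← add_assoc, Nat.div_add_mod]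
  have hlt := Nat.mod_lt q hK
  rcases (Nat.succ_le_of_lt hlt).lt_or_eq with hj | hj
  · rw [hq, Nat.mul_add_div hK, Nat.mul_add_mod, Nat.div_eq_of_lt hj, Nat.mod_eq_of_lt hj,
      add_zero]
    exact hin _ _ hj
  · replace hj : q % K + 1 = K := hj
    rw [hq, hj, ← mul_add_one, Nat.mul_div_cancel_left _ hK, Nat.mul_mod_right,
      show q % K = K - 1 by omega]
    exact hacross _

-- Padding with `v` lets chains of different lengths be concatenated in blocks of equal length.
structure DiscretePath (u v : X) where
  len : ℕ
  toFun : ℕ → X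
  len_pos : 0 < len
  toFun_zero : toFun 0 = u
  toFun_of_len_le : ∀ i, len ≤ i → toFun i = v

namespace DiscretePath

variable {u v : X}

instance : CoeFun (DiscretePath u v) (fun _ => ℕ → X) := ⟨toFun⟩

def single (u v : X) : DiscretePath u v where
  len := 1
  toFun i := if i = 0 then u else v
  len_pos := one_pos
  toFun_zero := rfl
  toFun_of_len_le i hi := if_neg (by omega)

lemma dist_single_le (i j : ℕ) : dist (single u v i) (single u v j) ≤ dist u v := by
  simp only [single]
  split_ifs <;> simp [dist_comm]

lemma dist_floor_le (A : DiscretePath u v) {δ : ℝ} (hA : ∀ i, dist (A i) (A (i + 1)) ≤ δ)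
    {a b : ℝ} (ha : 0 ≤ a) (hb : 0 ≤ b) (hab : |a - b| ≤ 1) :
    dist (A ⌊a⌋₊) (A ⌊b⌋₊) ≤ δ := by
  wlog hle : a ≤ b generalizing a b
  · rw [dist_comm]
    exact this hb ha (abs_sub_comm a b ▸ hab) (le_of_not_ge hle)
  have h₁ : ⌊a⌋₊ ≤ ⌊b⌋₊ := Nat.floor_le_floor hle
  have h₂ : ⌊b⌋₊ ≤ ⌊a⌋₊ + 1 :=
    (Nat.floor_le_floor (by linarith [le_abs_self (b - a), abs_sub_comm a b])).trans_eq
      (Nat.floor_add_one ha)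
  obtain h | h : ⌊b⌋₊ = ⌊a⌋₊ ∨ ⌊b⌋₊ = ⌊a⌋₊ + 1 := by omega
  · rw [h, dist_self]
    exact dist_nonneg.trans (hA 0)
  · rw [h]
    exact hA _

end DiscretePath

theorem exists_path_of_refining_seq {u v : X} {S : Set X} (hS : IsComplete S) {δ C : ℝ}
    (A : ℕ → DiscretePath u v) (K : ℕ → ℕ)
    (hmesh : ∀ m i, dist (A m i) (A m (i + 1)) ≤ δ / 2 ^ m)
    (hlen : ∀ m, (A (m + 1)).len = (A m).len * K m)
    (hnear : ∀ m q, dist (A (m + 1) q) (A m (q / K m)) ≤ C / 2 / 2 ^ m)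
    (hmem : ∀ m i, A m i ∈ S) : ∃ γ : Path u v, range γ ⊆ S := by
  set p : ℕ → ℝ → X := fun m t => A m ⌊t * (A m).len⌋₊
  have hstep : ∀ t m, dist (p m t) (p (m + 1) t) ≤ C / 2 / 2 ^ m := by
    intro t m
    have hK : (K m : ℝ) ≠ 0 := by
      have := (A (m + 1)).len_pos
      rw [hlen] at this
      exact_mod_cast (Nat.pos_of_mul_pos_left this).ne'
    have : ⌊t * (A (m + 1)).len⌋₊ / K m = ⌊t * (A m).len⌋₊ := by
      rw [← Nat.floor_div_natCast, hlen, Nat.cast_mul, ← mul_assoc, mul_div_cancel_right₀ _ hK]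
    rw [dist_comm]
    simpa [p, this] using hnear m ⌊t * (A (m + 1)).len⌋₊
  have hlim : ∀ t, ∃ x ∈ S, Tendsto (p · t) atTop (𝓝 x) := fun t =>
    cauchySeq_tendsto_of_isComplete hS (fun m => hmem _ _)
      (cauchySeq_of_le_geometric_two (hstep t))
  choose Γ hΓS hΓ using hlim
  have hΓ0 : Γ 0 = u := tendsto_nhds_unique (hΓ 0) (by simp [p, (A _).toFun_zero])
  have hΓ1 : Γ 1 = v := tendsto_nhds_unique (hΓ 1) (by simp [p, (A _).toFun_of_len_le])
  have hcont : UniformContinuous fun t : unitInterval => Γ t := by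
    refine uniformContinuous_of_approx fun ε hε => ?_
    have htend (c : ℝ) : Tendsto (fun m : ℕ => c / 2 ^ m) atTop (𝓝 0) :=
      tendsto_const_nhds.div_atTop (tendsto_pow_atTop_atTop_of_one_lt one_lt_two)
    obtain ⟨m, hCm, hδm⟩ :=
      (((htend C).eventually (gt_mem_nhds hε)).and ((htend δ).eventually (gt_mem_nhds hε))).exists
    have hM : (0 : ℝ) < (A m).len := Nat.cast_pos.2 (A m).len_pos
    refine ⟨fun t => p m t,
      fun t => (dist_le_of_le_geometric_two_of_tendsto (hstep t) (hΓ t) m).trans_lt hCm,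
      1 / (A m).len, by positivity, fun s t hst => ?_⟩
    refine ((A m).dist_floor_le (hmesh m) (mul_nonneg s.2.1 hM.le) (mul_nonneg t.2.1 hM.le)
      ?_).trans_lt hδm
    rw [← sub_mul, abs_mul, abs_of_pos hM, ← le_div_iff₀ hM, one_div]
    exact le_of_lt (by simpa [Subtype.dist_eq, Real.dist_eq, one_div] using hst)
  exact ⟨⟨⟨fun t => Γ t, hcont.continuous⟩, hΓ0, hΓ1⟩, range_subset_iff.2 fun t => hΓS t⟩

namespace HasBoundedTurning

variable {L : ℝ}

theorem exists_chain (hbt : HasBoundedTurning L X) (hL : 0 ≤ L) (a b : X) {δ : ℝ} (hδ : 0 < δ) :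
    ∃ (N : ℕ) (c : ℕ → X), c 0 = a ∧ (∀ j, N ≤ j → c j = b) ∧
      (∀ j, dist (c j) (c (j + 1)) ≤ δ) ∧ ∀ j, dist (c j) a ≤ L * dist a b := by
  obtain ⟨E, ha, hb, hE, hEdiam⟩ := hbt a b
  obtain ⟨N, c, hc0, hcN, hcE, hc⟩ := hE.isPreconnected.exists_seq_dist_le ha hb hδ
  exact ⟨N, c, hc0, hcN, hc, fun j =>
    (edist_le_ofReal (by positivity)).1 ((edist_le_ediam_of_mem (hcE j) ha).trans hEdiam)⟩

theorem exists_refinement (hbt : HasBoundedTurning L X) (hL : 0 ≤ L) {u v : X}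
    (A : DiscretePath u v) {δ : ℝ} (hδ : 0 < δ) :
    ∃ (K : ℕ) (B : DiscretePath u v), B.len = A.len * K ∧ (∀ q, dist (B q) (B (q + 1)) ≤ δ) ∧
      ∀ q, dist (B q) (A (q / K)) ≤ L * dist (A (q / K)) (A (q / K + 1)) := by
  choose N c hc0 hcN hc hcnear using fun i => hbt.exists_chain hL (A i) (A (i + 1)) hδ
  -- Every link of `A` becomes a block of exactly `K` points; links past `A.len` become constant.
  set K := (Finset.range A.len).sup N + 1
  have hK : 0 < K := Nat.succ_pos _
  have hNK : ∀ i < A.len, N i ≤ K - 1 := fun i hi =>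
    Finset.le_sup (f := N) (Finset.mem_range.2 hi)
  have hAv : ∀ i, A.len ≤ i → A i = v := A.toFun_of_len_le
  let f : ℕ → ℕ → X := fun i => if i < A.len then c i else fun _ => v
  have hf0 : ∀ i, f i 0 = A i := fun i => by
    by_cases hi : i < A.len
    · simp [f, hi, hc0]
    · simp [f, hi, hAv i (by omega)]
  have hfK : ∀ i, f i (K - 1) = A (i + 1) := fun i => by
    by_cases hi : i < A.len
    · simp [f, hi, hcN i _ (hNK i hi)]
    · simp [f, hi, hAv (i + 1) (by omega)]
  have hf : ∀ i j, dist (f i j) (f i (j + 1)) ≤ δ := fun i j => by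
    by_cases hi : i < A.len
    · simpa [f, hi] using hc i j
    · simpa [f, hi] using hδ.le
  have hfnear : ∀ i j, dist (f i j) (A i) ≤ L * dist (A i) (A (i + 1)) := fun i j => by
    by_cases hi : i < A.len
    · simpa [f, hi] using hcnear i j
    · simp only [f, hi, if_false, hAv i (by omega), dist_self]
      positivity
  refine ⟨K, ⟨A.len * K, fun q => f (q / K) (q % K), Nat.mul_pos A.len_pos hK, ?_, ?_⟩,
    rfl, fun q => dist_div_mod_succ_le hK (fun i j _ => hf i j)
      (fun i => by rw [hfK, ← hf0]; simpa using hδ.le) q, fun q => hfnear _ _⟩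
  · simp [hf0, A.toFun_zero]
  · intro q hq
    have : A.len ≤ q / K := (Nat.le_div_iff_mul_le hK).2 hq
    simp [f, show ¬ q / K < A.len by omega]

theorem exists_refining_seq (hbt : HasBoundedTurning L X) (hL : 0 ≤ L) {u v : X}
    (A₀ : DiscretePath u v) {δ : ℝ} (hδ : 0 < δ) (hA₀ : ∀ i, dist (A₀ i) (A₀ (i + 1)) ≤ δ) :
    ∃ (A : ℕ → DiscretePath u v) (K : ℕ → ℕ), A 0 = A₀ ∧ ∀ m,
      (∀ i, dist (A m i) (A m (i + 1)) ≤ δ / 2 ^ m) ∧ (A (m + 1)).len = (A m).len * K m ∧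
      ∀ q, dist (A (m + 1) q) (A m (q / K m)) ≤ L * (δ / 2 ^ m) := by
  choose K B hlen hB hnear using fun (m : ℕ) (A : DiscretePath u v) =>
    hbt.exists_refinement hL A (δ := δ / 2 ^ (m + 1)) (by positivity)
  let A : ℕ → DiscretePath u v := fun m => Nat.rec (motive := fun _ => DiscretePath u v) A₀ B m
  have hmesh : ∀ m i, dist (A m i) (A m (i + 1)) ≤ δ / 2 ^ m
    | 0, i => by simpa [A] using hA₀ i
    | m + 1, i => hB m (A m) i
  refine ⟨A, fun m => K m (A m), rfl, fun m => ⟨hmesh m, hlen m (A m), fun q => ?_⟩⟩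
  exact (hnear m (A m) q).trans (mul_le_mul_of_nonneg_left (hmesh m _) hL)

theorem exists_path_subset_closedBall (hbt : HasBoundedTurning L X) (hL : 0 ≤ L) {u v : X}
    (hcomp : IsCompact (closedBall u ((2 * L + 1) * dist u v))) :
    ∃ γ : Path u v, range γ ⊆ closedBall u ((2 * L + 1) * dist u v) := by
  rcases eq_or_ne u v with rfl | huv
  · exact ⟨Path.refl u, by simp [Path.refl_range]⟩
  set d := dist u v
  obtain ⟨A, K, hA0, hA⟩ := hbt.exists_refining_seq hL (DiscretePath.single u v)
    (dist_pos.2 huv) fun i => DiscretePath.dist_single_le i (i + 1)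
  have hball : ∀ m q, dist (A m q) u ≤ (2 * L + 1) * d - 2 * L * d / 2 ^ m := by
    intro m
    induction m with
    | zero =>
      intro q
      rw [hA0]
      exact (DiscretePath.dist_single_le q 0).trans_eq (by ring)
    | succ m ih =>
      intro q
      calc dist (A (m + 1) q) u ≤ dist (A (m + 1) q) (A m (q / K m)) + dist (A m (q / K m)) u :=
            dist_triangle _ _ _
        _ ≤ L * (d / 2 ^ m) + ((2 * L + 1) * d - 2 * L * d / 2 ^ m) :=
            add_le_add ((hA m).2.2 q) (ih _)
        _ = (2 * L + 1) * d - 2 * L * d / 2 ^ (m + 1) := by ring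
  refine exists_path_of_refining_seq hcomp.isComplete A K (C := 2 * L * d) (fun m => (hA m).1)
    (fun m => (hA m).2.1) (fun m q => ((hA m).2.2 q).trans_eq (by ring)) fun m q => ?_
  have : 0 ≤ 2 * L * d / 2 ^ m := by positivity
  exact mem_closedBall.2 ((hball m q).trans (by linarith))

theorem locallyPathConnectedSpace [LocallyCompactSpace X] (hbt : HasBoundedTurning L X)
    (hL : 0 ≤ L) : LocallyPathConnectedSpace X := by
  refine locallyPathConnectedSpace_iff_pathComponentIn_mem_nhds.2 fun x U hU hxU => ?_
  obtain ⟨ρ, hρ, hρc⟩ := exists_isCompact_closedBall x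
  obtain ⟨ε, hε, hεU⟩ := Metric.isOpen_iff.1 hU x hxU
  set r := min ρ (ε / 2)
  have hr : 0 < r := lt_min hρ (half_pos hε)
  filter_upwards [ball_mem_nhds x (div_pos hr (by linarith : (0 : ℝ) < 2 * L + 1))] with z hz
  have hR : (2 * L + 1) * dist x z ≤ r := by
    rw [mem_ball, dist_comm, lt_div_iff₀ (by linarith)] at hz
    linarith
  obtain ⟨γ, hγ⟩ := hbt.exists_path_subset_closedBall hL (hρc.of_isClosed_subset isClosed_closedBall
    (closedBall_subset_closedBall (hR.trans (min_le_left _ _))))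
  refine ⟨γ, fun t => hεU ?_⟩
  exact closedBall_subset_ball ((hR.trans (min_le_right _ _)).trans_lt (half_lt_self hε))
    (hγ ⟨t, rfl⟩)

end HasBoundedTurning

end

theorem statement_1 {X : Type*} [MetricSpace X] [LocallyCompactSpace X]
    {L : ℝ} (hL : 1 ≤ L)
    (hbt : ∀ x y : X, ∃ E : Set X, x ∈ E ∧ y ∈ E ∧ IsConnected E ∧
      EMetric.diam E ≤ ENNReal.ofReal (L * dist x y))
    {L' : ℝ} (hL' : L < L') (x y : X) :
    ∃ γ : Path x y,
      EMetric.diam (Set.range fun t => γ t) ≤ ENNReal.ofReal (L' * dist x y) := by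
  rcases eq_or_ne x y with rfl | hxy
  · refine ⟨Path.refl x, ?_⟩
    rw [show (range fun t => Path.refl x t) = {x} from Path.refl_range]
    exact ediam_singleton.trans_le zero_le
  have hL₀ : 0 ≤ L := by linarith
  have := HasBoundedTurning.locallyPathConnectedSpace hbt hL₀
  obtain ⟨E, hxE, hyE, hE, hEdiam⟩ := hbt x y
  set τ := (L' - L) * dist x y / 2
  have hτ : 0 < τ := by have := dist_pos.2 hxy; positivity
  obtain ⟨γ, hγ⟩ := hE.isPreconnected.joinedIn_of_subset_isOpen isOpen_thickening
    (self_subset_thickening hτ E) hxE hyE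
  refine ⟨γ, (ediam_mono (range_subset_iff.2 hγ)).trans ?_⟩
  exact (ediam_thickening_le_ofReal (by positivity) hτ.le hEdiam).trans_eq (by congr 1; ring)
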